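/- arXiv:2510.16934 — 4 statements merged into one kernel-verified Lean document; each statement's English description precedes it below -/
import Mathlib

section
/- For every integer n ≥ 1, the Pell numbers satisfy E_n = b_n + b_{n-1}. -/
def pellE : ℕ → ℤ
  | 0 => 0
  | 1 => 1
  | n + 2 => 2 * pellE (n + 1) + pellE n

def seqB : ℕ → ℤ
  | 0 => 0
  | 1 => 1
  | 2 => 1
  | n + 3 => seqB (n + 2) + 3 * seqB (n + 1) + seqB n

lemma key : ∀ n, pellE (n + 1) = seqB (n + 1) + seqB n
  | 0 => by norm_num [pellE, seqB]
  | 1 => by norm_num [pellE, seqB]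
  | n + 2 => by
    have h1 := key n
    have h2 := key (n + 1)
    show 2 * pellE (n + 2) + pellE (n + 1) = (seqB (n + 2) + 3 * seqB (n + 1) + seqB n) + seqB (n + 2)
    linarith

theorem stmt5 (n : ℕ) (hn : 1 ≤ n) : pellE n = seqB n + seqB (n - 1) := by
  obtain ⟨m, rfl⟩ := Nat.exists_eq_add_of_le hn
  rw [Nat.add_comm]; simpa using key m
end

section
/- Let U be the 3×3 integer matrix [[0,1,1],[1,0,1],[1,1,1]]. Then for every integer n ≥ 1, the n-th power of U equals the matrix [[E_n+E_{n-1}−b_n, b_n, E_n], [b_n, E_n+E_{n-1}−b_n, E_n], [E_n, E_n, E_n+E_{n-1}]]. -/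
lemma pellE_add (n : ℕ) : pellE (n + 2) = 2 * pellE (n + 1) + pellE n := by
  simp [pellE]

lemma seqB_add (n : ℕ) : seqB (n + 3) = seqB (n + 2) + 3 * seqB (n + 1) + seqB n := by
  simp [seqB]

lemma keyB : ∀ n, seqB (n + 1) + seqB n = pellE (n + 1) := by
  intro n
  induction n using Nat.twoStepInduction with
  | zero => decide
  | one => decide
  | more n ih1 ih2 =>
    have h3 := seqB_add n
    have hp := pellE_add (n + 1)
    have hp2 := pellE_add n
    have e1 : n + 2 + 1 = n + 3 := by ring
    rw [e1] at *
    linarith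

lemma aux6 : ∀ m : ℕ,
    (!![0, 1, 1; 1, 0, 1; 1, 1, 1] : Matrix (Fin 3) (Fin 3) ℤ) ^ (m + 1) =
      !![pellE (m + 1) + pellE m - seqB (m + 1), seqB (m + 1), pellE (m + 1);
         seqB (m + 1), pellE (m + 1) + pellE m - seqB (m + 1), pellE (m + 1);
         pellE (m + 1), pellE (m + 1), pellE (m + 1) + pellE m] := by
  intro m
  induction m with
  | zero =>
    norm_num [pellE, seqB]
  | succ m ih =>
    rw [pow_succ, ih, Matrix.mul_fin_three]
    have hk := keyB (m + 1)
    have h2 := pellE_add m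
    have e1 : m + 1 + 1 = m + 2 := by ring
    rw [e1] at *
    ext i j
    fin_cases i <;> fin_cases j <;> simp <;> linarith

theorem stmt6 (n : ℕ) (hn : 1 ≤ n) :
    (!![0, 1, 1; 1, 0, 1; 1, 1, 1] : Matrix (Fin 3) (Fin 3) ℤ) ^ n =
      !![pellE n + pellE (n - 1) - seqB n, seqB n, pellE n;
         seqB n, pellE n + pellE (n - 1) - seqB n, pellE n;
         pellE n, pellE n, pellE n + pellE (n - 1)] := by
  obtain ⟨m, rfl⟩ := Nat.exists_eq_add_of_le hn
  simpa [Nat.add_comm] using aux6 m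
end

section
/- For all integers m ≥ 1 and n ≥ 1, one has b_{m+n} = b_n·Q_{m-1} + b_m·Q_{n-1} − 2·b_n·b_m + E_n·E_m. -/
def genQ : ℕ → ℤ
  | 0 => 1
  | 1 => 3
  | n + 2 => 2 * genQ (n + 1) + genQ n

lemma pellE_rec (k : ℕ) : pellE (k + 2) = 2 * pellE (k + 1) + pellE k := rfl
lemma genQ_rec (k : ℕ) : genQ (k + 2) = 2 * genQ (k + 1) + genQ k := rfl
lemma seqB_rec (k : ℕ) : seqB (k + 3) = seqB (k + 2) + 3 * seqB (k + 1) + seqB k := rfl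

lemma QE : ∀ k, genQ k = pellE k + pellE (k + 1) := by
  intro k
  induction k using Nat.strong_induction_on with
  | _ k ih =>
    match k with
    | 0 => rfl
    | 1 => rfl
    | (k + 2) =>
      have h0 := ih k (by omega)
      have h1 := ih (k + 1) (by omega)
      have h1' : genQ (k + 1) = pellE (k + 1) + pellE (k + 2) := h1
      have e1 : pellE (k + 3) = 2 * pellE (k + 2) + pellE (k + 1) := pellE_rec (k + 1)
      have e0 : pellE (k + 2) = 2 * pellE (k + 1) + pellE k := pellE_rec k
      show genQ (k + 2) = pellE (k + 2) + pellE (k + 3)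
      rw [genQ_rec k]
      linarith

lemma BE : ∀ k, seqB (k + 1) = pellE (k + 1) - seqB k := by
  intro k
  induction k using Nat.strong_induction_on with
  | _ k ih =>
    match k with
    | 0 => rfl
    | 1 => norm_num [seqB, pellE]
    | 2 => norm_num [seqB, pellE]
    | (k + 3) =>
      have h0 := ih k (by omega)
      have h1 := ih (k + 1) (by omega)
      have h2 := ih (k + 2) (by omega)
      have h1' : seqB (k + 2) = pellE (k + 2) - seqB (k + 1) := h1
      have h2' : seqB (k + 3) = pellE (k + 3) - seqB (k + 2) := h2
      have e1 : seqB (k + 4) = seqB (k + 3) + 3 * seqB (k + 2) + seqB (k + 1) := seqB_rec (k + 1)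
      have e2 : pellE (k + 4) = 2 * pellE (k + 3) + pellE (k + 2) := pellE_rec (k + 2)
      show seqB (k + 4) = pellE (k + 4) - seqB (k + 3)
      linarith

lemma pellE_rec3 (k : ℕ) : pellE (k + 3) = pellE (k + 2) + 3 * pellE (k + 1) + pellE k := by
  rw [pellE_rec (k + 1), pellE_rec k]; ring

lemma genQ_pred (m : ℕ) : genQ (m + 2) = genQ (m + 1) + 3 * genQ m + genQ (m - 1) := by
  match m with
  | 0 => norm_num [genQ]
  | (k + 1) =>
    simp only [Nat.add_sub_cancel]
    rw [genQ_rec (k + 1), genQ_rec k]; ring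

lemma auxBQ : ∀ m n : ℕ, 1 ≤ n →
    seqB (m + n) = seqB n * genQ (m - 1) + seqB m * genQ (n - 1) - 2 * seqB n * seqB m
      + pellE n * pellE m := by
  intro m
  induction m using Nat.strong_induction_on with
  | _ m ih =>
    match m with
    | 0 =>
      intro n hn
      show seqB (0 + n) = seqB n * genQ 0 + seqB 0 * genQ (n - 1) - 2 * seqB n * seqB 0
        + pellE n * pellE 0
      rw [Nat.zero_add]
      show seqB n = seqB n * 1 + 0 * genQ (n - 1) - 2 * seqB n * 0 + pellE n * 0
      ring
    | 1 =>
      intro n hn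
      obtain ⟨k, rfl⟩ : ∃ k, n = k + 1 := ⟨n - 1, by omega⟩
      show seqB (1 + (k + 1)) = seqB (k + 1) * genQ 0 + seqB 1 * genQ k
        - 2 * seqB (k + 1) * seqB 1 + pellE (k + 1) * pellE 1
      rw [show 1 + (k + 1) = k + 2 from by omega]
      have hb := BE (k + 1)
      have hq := QE k
      have hp := pellE_rec k
      have e1 : genQ 0 = 1 := rfl
      have e2 : seqB 1 = 1 := rfl
      have e3 : pellE 1 = 1 := rfl
      rw [e1, e2, e3]
      linarith
    | 2 =>
      intro n hn
      obtain ⟨k, rfl⟩ : ∃ k, n = k + 1 := ⟨n - 1, by omega⟩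
      show seqB (2 + (k + 1)) = seqB (k + 1) * genQ 1 + seqB 2 * genQ k
        - 2 * seqB (k + 1) * seqB 2 + pellE (k + 1) * pellE 2
      rw [show 2 + (k + 1) = k + 3 from by omega]
      have hb1 := BE (k + 1)
      have hb2 := BE (k + 2)
      have hq := QE k
      have hp1 := pellE_rec k
      have hp2 := pellE_rec (k + 1)
      have e1 : genQ 1 = 3 := rfl
      have e2 : seqB 2 = 1 := rfl
      have e3 : pellE 2 = 2 := by norm_num [pellE]
      rw [e1, e2, e3]
      linarith
    | (m + 3) =>
      intro n hn
      have h0 := ih m (by omega) n hn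
      have h1 := ih (m + 1) (by omega) n hn
      have h2 := ih (m + 2) (by omega) n hn
      rw [show m + 1 + n = m + n + 1 from by omega] at h1
      rw [show m + 2 + n = m + n + 2 from by omega] at h2
      rw [show m + 3 + n = m + n + 3 from by omega]
      rw [show m + 2 - 1 = m + 1 from rfl] at h2
      rw [show m + 1 - 1 = m from rfl] at h1
      rw [show m + 3 - 1 = m + 2 from rfl]
      rw [seqB_rec (m + n), seqB_rec m, pellE_rec3 m, genQ_pred m]
      linear_combination h2 + 3 * h1 + h0

theorem stmt10 (m n : ℕ) (hm : 1 ≤ m) (hn : 1 ≤ n) :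
    seqB (m + n) = seqB n * genQ (m - 1) + seqB m * genQ (n - 1) - 2 * seqB n * seqB m
      + pellE n * pellE m := auxBQ m n hn
end

section
/- For every natural number n, one has b_n = r_n if n is even, and b_n = r_n + 1 if n is odd. -/
def seqR : ℕ → ℤ
  | 0 => 0
  | 1 => 0
  | 2 => 1
  | n + 3 => 2 * seqR (n + 2) + seqR (n + 1) + 1

lemma seqR_rec : ∀ n, seqR (n + 2) = 2 * seqR (n + 1) + seqR n + 1
  | 0 => by simp [seqR]
  | n + 1 => rfl

def P (n : ℕ) : Prop :=
  (Even n → seqB n = seqR n) ∧ (Odd n → seqB n = seqR n + 1)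

lemma aux : ∀ n, P n ∧ P (n + 1) ∧ P (n + 2) := by
  intro n
  induction n with
  | zero =>
    refine ⟨⟨fun _ => rfl, fun h => by simp [Nat.odd_iff] at h⟩,
      ⟨fun h => by simp [Nat.even_iff] at h, fun _ => by simp [seqB, seqR]⟩,
      ⟨fun _ => rfl, fun h => by simp [Nat.odd_iff] at h⟩⟩
  | succ k ih =>
    obtain ⟨h0, h1, h2⟩ := ih
    refine ⟨h1, h2, ?_, ?_⟩
    · intro he
      have hp := Nat.even_iff.mp he
      have e1 : seqB k = seqR k + 1 := h0.2 (Nat.odd_iff.mpr (by omega))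
      have e2 : seqB (k + 1) = seqR (k + 1) := h1.1 (Nat.even_iff.mpr (by omega))
      have e3 : seqB (k + 2) = seqR (k + 2) + 1 := h2.2 (Nat.odd_iff.mpr (by omega))
      have hr := seqR_rec k
      show seqB (k + 2) + 3 * seqB (k + 1) + seqB k = 2 * seqR (k + 2) + seqR (k + 1) + 1
      linarith
    · intro ho
      have hp := Nat.odd_iff.mp ho
      have e1 : seqB k = seqR k := h0.1 (Nat.even_iff.mpr (by omega))
      have e2 : seqB (k + 1) = seqR (k + 1) + 1 := h1.2 (Nat.odd_iff.mpr (by omega))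
      have e3 : seqB (k + 2) = seqR (k + 2) := h2.1 (Nat.even_iff.mpr (by omega))
      have hr := seqR_rec k
      show seqB (k + 2) + 3 * seqB (k + 1) + seqB k = 2 * seqR (k + 2) + seqR (k + 1) + 1 + 1
      linarith
    
theorem stmt11 (n : ℕ) :
    (Even n → seqB n = seqR n) ∧ (Odd n → seqB n = seqR n + 1) := (aux n).1
end
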